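/- arXiv:math/0407055 — 8 statements merged into one kernel-verified Lean document; each statement's English description precedes it below -/
import Mathlib

section
/- Let α be a type with decidable equality and let I, J, K be finsets of α. The following are equivalent: (i) Δ(J,K) ⊆ Δ(I,J); (ii) Δ(I,J) = Δ(J,K) ∪ Δ(K,I) and the sets Δ(J,K) and Δ(K,I) are disjoint; (iii) δ(I,J) = δ(J,K) + δ(K,I). -/
/-- The symmetric difference `Δ(A,B) = (A ∪ B) \ (A ∩ B)` of two finsets. -/
def finsetSymmDiff {α : Type*} [DecidableEq α] (A B : Finset α) : Finset α :=
  (A ∪ B) \ (A ∩ B)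

/-- `δ(A,B)` is the cardinality of the symmetric difference of `A` and `B`. -/
def finsetSymmDiffCard {α : Type*} [DecidableEq α] (A B : Finset α) : ℕ :=
  (finsetSymmDiff A B).card

lemma mem_finsetSymmDiff {α : Type*} [DecidableEq α] {A B : Finset α} {x : α} :
    x ∈ finsetSymmDiff A B ↔ (x ∈ A ∧ x ∉ B) ∨ (x ∈ B ∧ x ∉ A) := by
  simp [finsetSymmDiff, Finset.mem_sdiff]; tauto

lemma finsetSymmDiff_triangle {α : Type*} [DecidableEq α] (I J K : Finset α) :
    finsetSymmDiff I J ⊆ finsetSymmDiff J K ∪ finsetSymmDiff K I := by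
  intro x hx
  rw [Finset.mem_union, mem_finsetSymmDiff, mem_finsetSymmDiff]
  rw [mem_finsetSymmDiff] at hx
  by_cases hK : x ∈ K <;> tauto

/-- Lemma (comb1): for finsets `I`, `J`, `K`, the following are equivalent:
(i) `Δ(J,K) ⊆ Δ(I,J)`;
(ii) `Δ(I,J) = Δ(J,K) ∪ Δ(K,I)`, the union being disjoint;
(iii) `δ(I,J) = δ(J,K) + δ(K,I)`. -/
theorem finset_symmDiff_tfae {α : Type*} [DecidableEq α] (I J K : Finset α) :
    List.TFAE [
      finsetSymmDiff J K ⊆ finsetSymmDiff I J,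
      finsetSymmDiff I J = finsetSymmDiff J K ∪ finsetSymmDiff K I ∧
        Disjoint (finsetSymmDiff J K) (finsetSymmDiff K I),
      finsetSymmDiffCard I J = finsetSymmDiffCard J K + finsetSymmDiffCard K I] := by
  tfae_have 1 → 2 := by
    intro h
    constructor
    · apply Finset.Subset.antisymm (finsetSymmDiff_triangle I J K)
      intro x hx
      have h' := @h x
      simp only [Finset.mem_union, mem_finsetSymmDiff] at hx h' ⊢
      tauto
    · rw [Finset.disjoint_left]
      intro x hx hx'
      have hIJ := h hx
      simp only [mem_finsetSymmDiff] at hx hx' hIJ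
      tauto
  tfae_have 2 → 3 := by
    rintro ⟨heq, hdis⟩
    rw [finsetSymmDiffCard, finsetSymmDiffCard, finsetSymmDiffCard, heq,
      Finset.card_union_of_disjoint hdis]
  tfae_have 3 → 2 := by
    intro h
    have hsub := finsetSymmDiff_triangle I J K
    have hle : (finsetSymmDiff J K ∪ finsetSymmDiff K I).card ≤
        (finsetSymmDiff J K).card + (finsetSymmDiff K I).card :=
      Finset.card_union_le _ _
    have hcard := Finset.card_le_card hsub
    rw [finsetSymmDiffCard, finsetSymmDiffCard, finsetSymmDiffCard] at h
    have heq1 : (finsetSymmDiff I J).card = (finsetSymmDiff J K ∪ finsetSymmDiff K I).card :=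
      le_antisymm hcard (by omega)
    have heq : finsetSymmDiff I J = finsetSymmDiff J K ∪ finsetSymmDiff K I :=
      Finset.eq_of_subset_of_card_le hsub (le_of_eq heq1.symm)
    refine ⟨heq, ?_⟩
    rw [← Finset.card_union_add_card_inter] at h
    have : (finsetSymmDiff J K ∩ finsetSymmDiff K I).card = 0 := by omega
    rw [Finset.card_eq_zero] at this
    exact Finset.disjoint_iff_inter_eq_empty.mpr this
  tfae_have 2 → 1 := by
    rintro ⟨heq, -⟩
    rw [heq]
    exact Finset.subset_union_left
  tfae_finish
end

section
/- Let C be an abelian category admitting a derived category D(C), X an object of D(C), a ≤ b integers, and (φ_q)_{q∈ℤ} a family of endomorphisms of X in D(C) such that φ_q is the identity for every q ∉ [a,b] and such that the map H^q(φ_q) induced by φ_q on the q-th homology object is zero for every q ∈ ℤ. Then the composite endomorphism obtained by applying first φ_b, then φ_{b−1}, …, and finally φ_a (i.e. φ_b ≫ φ_{b−1} ≫ ⋯ ≫ φ_a in categorical composition notation) is the zero endomorphism of X. -/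
open CategoryTheory Category Limits DerivedCategory

universe w v u

/-- Given a family `φ : ℤ → (X ⟶ X)` of endomorphisms, `compFamily φ a n` is the composite
`φ (a + n) ≫ φ (a + n - 1) ≫ ⋯ ≫ φ a`, i.e. the endomorphism obtained by applying first
`φ (a + n)`, then `φ (a + n - 1)`, …, and finally `φ a`. -/
def compFamily {D : Type*} [Category D] {X : D} (φ : ℤ → (X ⟶ X)) (a : ℤ) : ℕ → (X ⟶ X)
  | 0 => φ a
  | n + 1 => φ (a + (n + 1)) ≫ compFamily φ a n

/-!
A morphism from an object of `D(C)` concentrated in degrees `≤ q` to one concentrated in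
degrees `≥ q` is zero as soon as it is zero on `H^q`: it factors through a morphism between
objects of the shifted heart, which is equivalent to `C` via `H^q`. By induction on `k`, the
composite `φ (a + k) ≫ ⋯ ≫ φ a` vanishes on `τ≤(a + k) X`: the rest of it factors through
`X ⟶ τ>(a + k - 1) X`, and `τ≤(a + k) X ⟶ X ⟶ X ⟶ τ>(a + k - 1) X`, with `φ (a + k)` in the
middle, is such a morphism in degree `a + k` killed by `H^(a + k)`.
Since `X` is concentrated in `[a, b]`, `τ≤b X ⟶ X` is an isomorphism.
-/

namespace DerivedCategory

open TStructure Pretriangulated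

variable {C : Type u} [Category.{v} C] [Abelian C] [HasDerivedCategory.{w} C]

lemma epi_homologyFunctor_map_truncGEπ_app (X : DerivedCategory C) (q : ℤ) :
    Epi ((homologyFunctor C q).map ((t.truncGEπ q).app X)) :=
  (HomologySequence.epi_homologyMap_mor₂_iff _ (t.triangleLTGE_distinguished q X) q (q + 1)).2
    ((isZero_of_isLE _ (q - 1) (q + 1) (by lia)).eq_of_tgt _ _)

lemma mono_homologyFunctor_map_truncLEι_app (X : DerivedCategory C) (q : ℤ) :
    Mono ((homologyFunctor C q).map ((t.truncLEι q).app X)) :=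
  (HomologySequence.mono_homologyMap_mor₁_iff _ (t.triangleLEGT_distinguished q X) (q - 1) q).2
    ((isZero_of_isGE ((t.truncGT q).obj X) (q + 1) (q - 1) (by lia)).eq_of_src _ _)

lemma eq_zero_of_isGE_of_isLE_of_homologyFunctor_map_eq_zero {S Y : DerivedCategory C} (q : ℤ)
    [S.IsGE q] [S.IsLE q] [Y.IsGE q] [Y.IsLE q] (f : S ⟶ Y)
    (hf : (homologyFunctor C q).map f = 0) : f = 0 := by
  obtain ⟨A, ⟨eS⟩⟩ := S.exists_iso_singleFunctor_obj_of_isGE_of_isLE q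
  obtain ⟨B, ⟨eY⟩⟩ := Y.exists_iso_singleFunctor_obj_of_isGE_of_isLE q
  obtain ⟨u, hu⟩ := (singleFunctor C q).map_surjective (eS.inv ≫ f ≫ eY.hom)
  have : (singleFunctor C q ⋙ homologyFunctor C q).Faithful :=
    Functor.Faithful.of_iso (singleFunctorCompHomologyFunctorIso C q).symm
  have hu₀ : u = 0 := (singleFunctor C q ⋙ homologyFunctor C q).map_injective (by simp [hu, hf])
  have hfu : f = eS.hom ≫ (singleFunctor C q).map u ≫ eY.inv := by simp [hu]
  rw [hfu, hu₀, Functor.map_zero, zero_comp, comp_zero]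

lemma eq_zero_of_isLE_of_isGE_of_homologyFunctor_map_eq_zero {S Y : DerivedCategory C} (q : ℤ)
    [S.IsLE q] [Y.IsGE q] (f : S ⟶ Y) (hf : (homologyFunctor C q).map f = 0) : f = 0 := by
  let g := t.liftTruncLE (t.descTruncGE f q) q
  have hfg : f = (t.truncGEπ q).app S ≫ g ≫ (t.truncLEι q).app Y := by simp [g]
  have := epi_homologyFunctor_map_truncGEπ_app S q
  have := mono_homologyFunctor_map_truncLEι_app Y q
  have hg : g = 0 := by
    refine eq_zero_of_isGE_of_isLE_of_homologyFunctor_map_eq_zero q g ?_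
    rw [← cancel_epi ((homologyFunctor C q).map ((t.truncGEπ q).app S)),
      ← cancel_mono ((homologyFunctor C q).map ((t.truncLEι q).app Y)),
      comp_zero, zero_comp, ← Functor.map_comp, ← Functor.map_comp, assoc, ← hfg, hf]
  rw [hfg, hg, zero_comp, comp_zero]

lemma truncLEι_comp_comp_eq_zero {X Y Z : DerivedCategory C} (n : ℤ) (g : X ⟶ Y) (f : Y ⟶ Z)
    (hg : (homologyFunctor C (n + 1)).map g = 0) (hf : (t.truncLEι n).app Y ≫ f = 0) :
    (t.truncLEι (n + 1)).app X ≫ g ≫ f = 0 := by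
  obtain ⟨f', rfl⟩ : ∃ f' : (t.truncGT n).obj Y ⟶ Z, f = (t.truncGTπ n).app Y ≫ f' :=
    Triangle.yoneda_exact₂ _ (t.triangleLEGT_distinguished n Y) f hf
  have : (t.truncLEι (n + 1)).app X ≫ g ≫ (t.truncGTπ n).app Y = 0 :=
    eq_zero_of_isLE_of_isGE_of_homologyFunctor_map_eq_zero (n + 1) _
      (by rw [Functor.map_comp, Functor.map_comp, hg, zero_comp, comp_zero])
  rw [reassoc_of% this, zero_comp]

lemma truncLEι_comp_compFamily_eq_zero {X : DerivedCategory C} (a : ℤ) [X.IsGE a]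
    (φ : ℤ → (X ⟶ X)) (hφ : ∀ q, (homologyFunctor C q).map (φ q) = 0) (k : ℕ) :
    (t.truncLEι (a + k)).app X ≫ compFamily φ a k = 0 := by
  induction k with
  | zero =>
    rw [Nat.cast_zero, add_zero, compFamily]
    exact eq_zero_of_isLE_of_isGE_of_homologyFunctor_map_eq_zero (Y := X) a _
      (by rw [Functor.map_comp, hφ, comp_zero])
  | succ k ih =>
    rw [compFamily, Nat.cast_succ, ← add_assoc]
    exact truncLEι_comp_comp_eq_zero _ (φ _) _ (hφ _) ih

end DerivedCategory

/-- The Remark following Lemma (actionphi): if `(φ_q)` is a family of endomorphisms of an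
object `X` of the derived category, equal to the identity outside `[a,b]`, and each `φ_q`
induces the zero map on the `q`-th homology object, then the composite
`φ_b ≫ φ_{b-1} ≫ ⋯ ≫ φ_a` (applying first `φ_b`, finally `φ_a`) is zero. -/
theorem compFamily_eq_zero_of_homology_map_eq_zero
    {C : Type u} [Category.{v} C] [Abelian C] [HasDerivedCategory.{w} C]
    (X : DerivedCategory C) (a b : ℤ) (hab : a ≤ b)
    (φ : ℤ → (X ⟶ X))
    (hid : ∀ q : ℤ, q ∉ Set.Icc a b → φ q = 𝟙 X)
    (hzero : ∀ q : ℤ, (homologyFunctor C q).map (φ q) = 0) :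
    compFamily φ a (b - a).toNat = 0 := by
  have hX : ∀ q, q ∉ Set.Icc a b → IsZero ((homologyFunctor C q).obj X) := fun q hq ↦ by
    simpa [IsZero.iff_id_eq_zero, hid q hq] using hzero q
  have : X.IsGE a := (X.isGE_iff a).2 fun q hq ↦ hX q (by rw [Set.mem_Icc]; lia)
  have : X.IsLE b := (X.isLE_iff b).2 fun q hq ↦ hX q (by rw [Set.mem_Icc]; lia)
  have hb : a + (b - a).toNat = b := by lia
  have h := truncLEι_comp_compFamily_eq_zero a φ hzero (b - a).toNat
  rw [hb] at h
  rwa [← cancel_epi ((TStructure.t.truncLEι b).app X), comp_zero]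
end

section
/- Let d ≥ 1 and work in ℝ^d = (Fin d → ℝ). For i ∈ Fin (d−1) let α_i : ℝ^d → ℝ be the linear form α_i(x) = x_i − x_{i+1}. For a finset I of Fin (d−1) put ε_I(i) = −1 if i ∈ I and ε_I(i) = 1 otherwise, and let X_I = {x ∈ ℝ^d : ε_I(i)·α_i(x) > 0 for all i}. Then for all finsets I, J of Fin (d−1), the ℝ-linear span of closure(X_I) ∩ closure(X_J) is exactly the subspace {x ∈ ℝ^d : α_i(x) = 0 for all i ∈ Δ(I,J)}. -/
private lemma exists_telescope (n : ℕ) (s : Fin n → ℝ) :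
    ∃ x : Fin (n + 1) → ℝ, ∀ i : Fin n, x i.castSucc - x i.succ = s i := by
  refine ⟨fun j => -(∑ k ∈ Finset.range j.val, if h : k < n then s ⟨k, h⟩ else 0), fun i => ?_⟩
  simp only [Fin.coe_castSucc, Fin.val_succ]
  rw [Finset.sum_range_succ, dif_pos i.isLt]
  simp

private lemma mem_closure_cone (n : ℕ) (K : Finset (Fin n)) (y : Fin (n + 1) → ℝ)
    (h : ∀ i : Fin n, 0 ≤ (if i ∈ K then (-1 : ℝ) else 1) * (y i.castSucc - y i.succ)) :
    y ∈ closure {x : Fin (n + 1) → ℝ | ∀ i : Fin n,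
      (if i ∈ K then (-1 : ℝ) else 1) * (x i.castSucc - x i.succ) > 0} := by
  obtain ⟨v, hv⟩ := exists_telescope n (fun i => if i ∈ K then (-1 : ℝ) else 1)
  have hv1 : ∀ i : Fin n,
      (if i ∈ K then (-1 : ℝ) else 1) * (v i.castSucc - v i.succ) = 1 := by
    intro i; rw [hv i]; split <;> norm_num
  have hmem : ∀ m : ℕ, (y + (1 / (m + 1 : ℝ)) • v) ∈ {x : Fin (n + 1) → ℝ | ∀ i : Fin n,
      (if i ∈ K then (-1 : ℝ) else 1) * (x i.castSucc - x i.succ) > 0} := by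
    intro m i
    have hpos : (0 : ℝ) < 1 / (m + 1 : ℝ) := by positivity
    have key : (if i ∈ K then (-1 : ℝ) else 1) *
        ((y + (1 / (m + 1 : ℝ)) • v) i.castSucc - (y + (1 / (m + 1 : ℝ)) • v) i.succ)
        = (if i ∈ K then (-1 : ℝ) else 1) * (y i.castSucc - y i.succ)
          + (1 / (m + 1 : ℝ)) * ((if i ∈ K then (-1 : ℝ) else 1) * (v i.castSucc - v i.succ)) := by
      simp only [Pi.add_apply, Pi.smul_apply, smul_eq_mul]; ring
    show (if i ∈ K then (-1 : ℝ) else 1) *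
        ((y + (1 / (m + 1 : ℝ)) • v) i.castSucc - (y + (1 / (m + 1 : ℝ)) • v) i.succ) > 0
    rw [key, hv1 i, mul_one]
    have := h i
    linarith
  have htend : Filter.Tendsto (fun m : ℕ => y + (1 / (m + 1 : ℝ)) • v) Filter.atTop (nhds y) := by
    have h0 : Filter.Tendsto (fun m : ℕ => (1 / (m + 1 : ℝ))) Filter.atTop (nhds 0) :=
      tendsto_one_div_add_atTop_nhds_zero_nat
    have := (h0.smul_const v)
    rw [zero_smul] at this
    simpa using Filter.Tendsto.const_add y this
  exact mem_closure_of_tendsto htend (Filter.Eventually.of_forall hmem)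

private lemma closure_cone_subset (n : ℕ) (K : Finset (Fin n)) :
    closure {x : Fin (n + 1) → ℝ | ∀ i : Fin n,
      (if i ∈ K then (-1 : ℝ) else 1) * (x i.castSucc - x i.succ) > 0} ⊆
    {x : Fin (n + 1) → ℝ | ∀ i : Fin n,
      0 ≤ (if i ∈ K then (-1 : ℝ) else 1) * (x i.castSucc - x i.succ)} := by
  apply closure_minimal
  · intro x hx i; exact le_of_lt (hx i)
  · have : {x : Fin (n + 1) → ℝ | ∀ i : Fin n,
        0 ≤ (if i ∈ K then (-1 : ℝ) else 1) * (x i.castSucc - x i.succ)} =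
        ⋂ i : Fin n, {x | 0 ≤ (if i ∈ K then (-1 : ℝ) else 1) * (x i.castSucc - x i.succ)} := by
      ext x; simp [Set.mem_iInter]
    rw [this]
    exact isClosed_iInter fun i => isClosed_le continuous_const
      (continuous_const.mul ((continuous_apply _).sub (continuous_apply _)))

/-- §3.1.3 for the root system of type `A_n` (the group `GL_{n+1}`): writing `d = n + 1 ≥ 1`,
for `i : Fin n` let `α_i(x) = x_i - x_{i+1}` be the simple roots of `ℝ^d`, and for a finset
`I` of `Fin n` let `X_I` be the open cone of those `x` with `ε_I(i)·α_i(x) > 0` for all `i`,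
where `ε_I(i) = -1` if `i ∈ I` and `ε_I(i) = 1` otherwise. Then the `ℝ`-linear span of
`closure (X_I) ∩ closure (X_J)` is exactly `{x | α_i(x) = 0 for all i ∈ Δ(I,J)}`, where
`Δ(I,J) = (I ∪ J) \ (I ∩ J)` is the symmetric difference. -/
theorem span_inter_closure_cones_eq (n : ℕ) (I J : Finset (Fin n)) :
    (Submodule.span ℝ
      (closure {x : Fin (n + 1) → ℝ | ∀ i : Fin n,
          (if i ∈ I then (-1 : ℝ) else 1) * (x i.castSucc - x i.succ) > 0} ∩
       closure {x : Fin (n + 1) → ℝ | ∀ i : Fin n,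
          (if i ∈ J then (-1 : ℝ) else 1) * (x i.castSucc - x i.succ) > 0}) :
      Set (Fin (n + 1) → ℝ)) =
    {x : Fin (n + 1) → ℝ | ∀ i ∈ (I ∪ J) \ (I ∩ J), x i.castSucc - x i.succ = 0} := by
  set Δ : Finset (Fin n) := (I ∪ J) \ (I ∩ J) with hΔ
  set CI : Set (Fin (n + 1) → ℝ) := closure {x : Fin (n + 1) → ℝ | ∀ i : Fin n,
      (if i ∈ I then (-1 : ℝ) else 1) * (x i.castSucc - x i.succ) > 0} with hCI
  set CJ : Set (Fin (n + 1) → ℝ) := closure {x : Fin (n + 1) → ℝ | ∀ i : Fin n,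
      (if i ∈ J then (-1 : ℝ) else 1) * (x i.castSucc - x i.succ) > 0} with hCJ
  set P : Submodule ℝ (Fin (n + 1) → ℝ) :=
    { carrier := {x : Fin (n + 1) → ℝ | ∀ i ∈ Δ, x i.castSucc - x i.succ = 0}
      add_mem' := by intro a b ha hb i hi; have h1 := ha i hi; have h2 := hb i hi
                     simp only [Pi.add_apply]; linarith
      zero_mem' := by intro i hi; simp
      smul_mem' := by intro c a ha i hi; have h1 := ha i hi
                      simp only [Pi.smul_apply, smul_eq_mul]
                      linear_combination c * h1 } with hP
  have hsign : ∀ i ∈ Δ, ((i ∈ I ∧ i ∉ J) ∨ (i ∈ J ∧ i ∉ I)) := by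
    intro i hi
    rw [hΔ, Finset.mem_sdiff, Finset.mem_union, Finset.mem_inter] at hi
    tauto
  apply Set.Subset.antisymm
  · -- span ⊆ P
    have hle : Submodule.span ℝ (CI ∩ CJ) ≤ P := Submodule.span_le.mpr ?_
    · exact hle
    intro x hx
    obtain ⟨hxI, hxJ⟩ := hx
    have hI := closure_cone_subset n I hxI
    have hJ := closure_cone_subset n J hxJ
    intro i hi
    have hI' := hI i
    have hJ' := hJ i
    rcases hsign i hi with ⟨h1, h2⟩ | ⟨h1, h2⟩
    · rw [if_pos h1] at hI'; rw [if_neg h2] at hJ'; linarith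
    · rw [if_neg h2] at hI'; rw [if_pos h1] at hJ'; linarith
  · -- RHS ⊆ span
    intro x hx
    rw [SetLike.mem_coe]
    obtain ⟨c, hc⟩ := exists_telescope n
      (fun i => if i ∈ Δ then 0 else (if i ∈ I then (-1 : ℝ) else 1))
    have hεeq : ∀ i ∉ Δ, (if i ∈ I then (-1 : ℝ) else 1) = (if i ∈ J then (-1 : ℝ) else 1) := by
      intro i hi
      rw [hΔ, Finset.mem_sdiff, Finset.mem_union, Finset.mem_inter, not_and, not_not] at hi
      by_cases hiI : i ∈ I
      · rw [if_pos hiI, if_pos (hi (Or.inl hiI)).2]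
      · rw [if_neg hiI]
        by_cases hiJ : i ∈ J
        · exact absurd (hi (Or.inr hiJ)).1 hiI
        · rw [if_neg hiJ]
    have hcmemI : ∀ z : Fin (n + 1) → ℝ, (∀ i ∈ Δ, z i.castSucc - z i.succ = 0) →
        (∀ i ∉ Δ, 0 ≤ (if i ∈ I then (-1 : ℝ) else 1) * (z i.castSucc - z i.succ)) →
        z ∈ CI ∩ CJ := by
      intro z hz1 hz2
      constructor
      · apply mem_closure_cone
        intro i
        by_cases hi : i ∈ Δ
        · rw [hz1 i hi, mul_zero]
        · exact hz2 i hi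
      · apply mem_closure_cone
        intro i
        by_cases hi : i ∈ Δ
        · rw [hz1 i hi, mul_zero]
        · rw [← hεeq i hi]; exact hz2 i hi
    set T : ℝ := 1 + ∑ i : Fin n, |x i.castSucc - x i.succ| with hT
    have hTbound : ∀ i : Fin n,
        0 < (if i ∈ I then (-1 : ℝ) else 1) * (x i.castSucc - x i.succ) + T := by
      intro i
      have h1 : |x i.castSucc - x i.succ| ≤ ∑ j : Fin n, |x j.castSucc - x j.succ| :=
        Finset.single_le_sum (f := fun j : Fin n => |x j.castSucc - x j.succ|)
          (fun j _ => abs_nonneg _) (Finset.mem_univ i)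
      have h2 : -|x i.castSucc - x i.succ| ≤
          (if i ∈ I then (-1 : ℝ) else 1) * (x i.castSucc - x i.succ) := by
        have ha := neg_abs_le (x i.castSucc - x i.succ)
        have hb := le_abs_self (x i.castSucc - x i.succ)
        split <;> linarith
      rw [hT]; linarith
    have hcΔ : ∀ i ∈ Δ, c i.castSucc - c i.succ = 0 := by
      intro i hi; rw [hc i, if_pos hi]
    have hcΔc : ∀ i ∉ Δ, (if i ∈ I then (-1 : ℝ) else 1) * (c i.castSucc - c i.succ) = 1 := by
      intro i hi; rw [hc i, if_neg hi]; split <;> norm_num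
    have hcI : c ∈ CI ∩ CJ :=
      hcmemI c hcΔ (fun i hi => by rw [hcΔc i hi]; norm_num)
    have hxc : (x + T • c) ∈ CI ∩ CJ := by
      apply hcmemI
      · intro i hi
        have h1 := hx i hi
        have h2 := hcΔ i hi
        simp only [Pi.add_apply, Pi.smul_apply, smul_eq_mul]
        linear_combination h1 + T * h2
      · intro i hi
        have h2 := hcΔc i hi
        have h3 := hTbound i
        simp only [Pi.add_apply, Pi.smul_apply, smul_eq_mul]
        have key : (if i ∈ I then (-1:ℝ) else 1) *
            (x i.castSucc + T * c i.castSucc - (x i.succ + T * c i.succ)) =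
            (if i ∈ I then (-1:ℝ) else 1) * (x i.castSucc - x i.succ) +
            T * ((if i ∈ I then (-1:ℝ) else 1) * (c i.castSucc - c i.succ)) := by ring
        rw [key, h2, mul_one]
        linarith
    have h1 : (x + T • c) ∈ Submodule.span ℝ (CI ∩ CJ) := Submodule.subset_span hxc
    have h2 : c ∈ Submodule.span ℝ (CI ∩ CJ) := Submodule.subset_span hcI
    have := Submodule.sub_mem _ h1 (Submodule.smul_mem _ T h2)
    simpa using this
end

section
/- Let O be a discrete valuation ring with uniformizer ϖ and fraction field K, let V be a finite-dimensional K-vector space, and let q be a natural number. Let (L_i)_{i∈ℤ} be O-submodules of V such that for every i: L_i ⊆ L_{i+1}, L_i is finitely generated over O, L_i spans V over K, and L_i = ϖ·L_{i+q+1}. Let (N_i)_{i∈ℤ} be O-submodules of V with L_{i−1} ⊆ N_i ⊆ L_i and N_i = ϖ·N_{i+q+1} for all i. Then there exists a K-linear subspace W of V such that for every i ∈ ℤ: (W ∩ L_i) + L_{i−1} = N_i. -/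
open Pointwise

/-!
For `j = 1, …, q + 1` choose `M_j ⊆ N_j` generated by lifts of a minimal system of generators
of `N_j` modulo `L_{j-1}`; minimality gives `M_j ∩ L_{j-1} ⊆ ϖ M_j`. Put `A = ∑ M_j` and
`W = K A`. Peeling off the top index `j > i` one at a time (modular law), the part of an
element of `A ∩ L_i` coming from the `M_j` with `j > i` lies in `ϖ A ⊆ L_0`. Hence
`A ∩ L_i ⊆ N_i` for `i ≥ 1`, and `A ∩ L_i ⊆ ϖ (A ∩ L_{i+q+1})` for `i ≤ 0`, which gives
`A ∩ L_i ⊆ N_i` for all `i` by periodicity of `N`. Clearing ϖ-denominators yields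
`W ∩ L_i ⊆ N_i`. Finally `ϖ W = W` makes the identity periodic in `i`, and on the window
`1 ≤ i ≤ q + 1` the reverse inclusion is `N_i = M_i + L_{i-1}`.
-/

theorem Finset.sup_inf_le_of_forall_lt {α : Type*} [Lattice α] [OrderBot α] [IsModularLattice α]
    {L M : ℤ → α} {B : α} {i : ℤ} {s : Finset ℤ} (hL : Monotone L)
    (hML : ∀ j ∈ s, M j ≤ L j) (hMB : ∀ j ∈ s, M j ⊓ L (j - 1) ≤ B) (hB : B ≤ L i)
    (hs : ∀ j ∈ s, i < j) : s.sup M ⊓ L i ≤ B := by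
  induction s using Finset.induction_on_max with
  | empty => simp
  | insert a s hlt ih =>
    have hsa : s.sup M ≤ L (a - 1) :=
      Finset.sup_le fun j hj => (hML j (mem_insert_of_mem hj)).trans (hL (by linarith [hlt j hj]))
    have hia : L i ≤ L (a - 1) := hL (by linarith [hs a (mem_insert_self a s)])
    have ih' : s.sup M ⊓ L i ≤ B := ih (fun j hj => hML j (mem_insert_of_mem hj))
      (fun j hj => hMB j (mem_insert_of_mem hj)) (fun j hj => hs j (mem_insert_of_mem hj))
    calc (insert a s).sup M ⊓ L i = (s.sup M ⊔ M a) ⊓ L (a - 1) ⊓ L i := by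
          rw [sup_insert, sup_comm, inf_assoc, inf_eq_right.2 hia]
      _ = (s.sup M ⊔ M a ⊓ L (a - 1)) ⊓ L i := by rw [sup_inf_assoc_of_le _ hsa]
      _ ≤ (s.sup M ⊔ B) ⊓ L i := by gcongr; exact hMB a (mem_insert_self a s)
      _ = B ⊔ s.sup M ⊓ L i := by rw [sup_comm, sup_inf_assoc_of_le _ hB]
      _ ≤ B := sup_le le_rfl ih'

theorem Int.forall_of_forall_pos_of_add {P : ℤ → Prop} {p : ℤ} (hp : 0 < p)
    (hpos : ∀ i, 0 < i → P i) (hstep : ∀ i ≤ 0, P (i + p) → P i) (i : ℤ) : P i := by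
  induction h : (1 - i).toNat using Nat.strong_induction_on generalizing i with
  | _ n ih =>
    rcases lt_or_ge 0 i with hi | hi
    · exact hpos i hi
    · exact hstep i hi (ih _ (by omega) (i + p) rfl)

namespace Submodule

section LocalRing

variable {R M : Type*} [CommRing R] [IsLocalRing R] [AddCommGroup M] [Module R M]

open IsLocalRing in
theorem exists_sup_eq_and_inf_le_maximalIdeal_smul {P Q : Submodule R M} (hPQ : P ≤ Q)
    (hQ : Q.FG) : ∃ M' : Submodule R M, M' ⊔ P = Q ∧ M' ⊓ P ≤ maximalIdeal R • M' := by
  classical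
  obtain ⟨T, hT⟩ := hQ
  obtain ⟨S, hS, hmin⟩ := (measure Finset.card).wf.has_min {S : Finset M | span R S ⊔ P = Q}
    ⟨T, by rw [Set.mem_ofPred_eq, hT, sup_eq_left.2 hPQ]⟩
  replace hS : span R S ⊔ P = Q := hS
  have herase : ∀ t ∈ S, t ∉ span R (S.erase t : Set M) ⊔ P := by
    intro t ht hmem
    refine hmin (S.erase t) (le_antisymm ?_ ?_) (Finset.card_erase_lt_of_mem ht)
    · rw [← hS]
      exact sup_le_sup_right (span_mono (Finset.coe_subset.2 (S.erase_subset t))) P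
    · rw [← hS]
      refine sup_le (span_le.2 fun s hs => ?_) le_sup_right
      by_cases hst : s = t
      · exact hst ▸ hmem
      · exact mem_sup_left (subset_span (Finset.mem_erase.2 ⟨hst, hs⟩))
  refine ⟨span R S, hS, ?_⟩
  rintro x ⟨hxS, hxP⟩
  obtain ⟨a, -, rfl⟩ := mem_span_finset.1 hxS
  refine sum_mem fun t ht => smul_mem_smul ?_ (subset_span ht)
  -- a unit coefficient would make the generator `t` redundant
  by_contra hunit
  rw [mem_maximalIdeal, mem_nonunits_iff, not_not] at hunit
  obtain ⟨u, hu⟩ := hunit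
  apply herase t ht
  have hsplit : a t • t = ∑ s ∈ S, a s • s - ∑ s ∈ S.erase t, a s • s := by
    rw [← Finset.add_sum_erase S _ ht, add_sub_cancel_right]
  rw [← smul_mem_iff' _ u, Units.smul_def, hu, hsplit]
  exact sub_mem (mem_sup_right hxP)
    (mem_sup_left (sum_mem fun s hs => smul_mem _ _ (subset_span hs)))

end LocalRing

section TorsionFree

variable {R M : Type*} [CommRing R] [IsDomain R] [AddCommGroup M] [Module R M]
  [Module.IsTorsionFree R M] {c : R}

theorem pointwise_smul_injective (hc : c ≠ 0) :
    Function.Injective fun A : Submodule R M => c • A :=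
  map_injective_of_injective (smul_right_injective M hc)

theorem pointwise_smul_inf (hc : c ≠ 0) (A B : Submodule R M) :
    c • (A ⊓ B) = c • A ⊓ c • B :=
  map_inf _ (smul_right_injective M hc)

theorem smul_mem_pointwise_smul_iff (hc : c ≠ 0) {A : Submodule R M} {x : M} :
    c • x ∈ c • A ↔ x ∈ A :=
  (smul_right_injective M hc).mem_set_image

end TorsionFree

section ScalarTower

variable {O K V : Type*} [CommRing O] [Field K] [Algebra O K] [AddCommGroup V] [Module K V]
  [Module O V] [IsScalarTower O K V]

theorem pointwise_smul_restrictScalars {c : O} (hc : algebraMap O K c ≠ 0) (W : Submodule K V) :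
    c • W.restrictScalars O = W.restrictScalars O := by
  ext x
  rw [mem_smul_pointwise_iff_exists]
  refine ⟨fun ⟨y, hy, hyx⟩ => hyx ▸ W.smul_of_tower_mem c hy, fun hx => ?_⟩
  refine ⟨(algebraMap O K c)⁻¹ • x, W.smul_mem _ hx, ?_⟩
  rw [← algebraMap_smul K c, smul_inv_smul₀ hc]

theorem exists_pow_smul_mem_of_mem_span [IsDomain O] [IsDiscreteValuationRing O]
    [IsFractionRing O K] {ϖ : O} (hϖ : Irreducible ϖ) {A : Submodule O V} {x : V}
    (hx : x ∈ span K (A : Set V)) : ∃ n : ℕ, ϖ ^ n • x ∈ A := by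
  have := isLocalizedModule_id (nonZeroDivisors O) V K
  rw [← Set.image_id (A : Set V), ← LinearMap.id_coe (R := O),
    ← localized'_eq_span K (nonZeroDivisors O)] at hx
  obtain ⟨m, hm, s, hsx⟩ := hx
  rw [IsLocalizedModule.mk'_eq_iff, LinearMap.id_apply] at hsx
  obtain ⟨n, u, hu⟩ := IsDiscreteValuationRing.associated_pow_irreducible
    (nonZeroDivisors.coe_ne_zero s) hϖ
  refine ⟨n, ?_⟩
  rw [← hu, mul_comm, mul_smul, ← Submonoid.smul_def, ← hsx]
  exact A.smul_of_tower_mem _ hm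

end ScalarTower

end Submodule

section PeriodicChain

open Submodule

variable {O V : Type*} [CommRing O] [IsDomain O] [AddCommGroup V] [Module O V]
  [Module.IsTorsionFree O V] {ϖ : O} {p : ℤ} {L N : ℤ → Submodule O V}

theorem window_sup_inf_le (hϖ : ϖ ≠ 0) (hp : 0 < p) (hL : Monotone L)
    (hLper : ∀ i, L i = ϖ • L (i + p)) (hNper : ∀ i, N i = ϖ • N (i + p))
    (hN1 : ∀ i, L (i - 1) ≤ N i) (hN2 : ∀ i, N i ≤ L i) {M : ℤ → Submodule O V}
    (hMN : ∀ j, M j ≤ N j) (hML : ∀ j, M j ⊓ L (j - 1) ≤ ϖ • M j) (i : ℤ) :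
    (Finset.Icc 1 p).sup M ⊓ L i ≤ N i := by
  set A := (Finset.Icc 1 p).sup M
  have hMLj : ∀ j, M j ≤ L j := fun j => (hMN j).trans (hN2 j)
  have hϖA : ϖ • A ≤ L 0 := by
    rw [hLper 0, zero_add]
    exact smul_le_smul_left _
      (Finset.sup_le fun j hj => (hMLj j).trans (hL (Finset.mem_Icc.1 hj).2))
  have hMA : ∀ j ∈ Finset.Icc 1 p, M j ⊓ L (j - 1) ≤ ϖ • A := fun j hj =>
    (hML j).trans (smul_le_smul_left _ (Finset.le_sup hj))
  refine Int.forall_of_forall_pos_of_add (P := fun i => A ⊓ L i ≤ N i) hp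
    (fun i hi => ?_) (fun i hi ih => ?_) i
  · set lower := {j ∈ Finset.Icc 1 p | j ≤ i}.sup M
    set upper := {j ∈ Finset.Icc 1 p | ¬ j ≤ i}.sup M
    have hlower : lower ≤ N i := Finset.sup_le fun j hj => by
      rcases (Finset.mem_filter.1 hj).2.eq_or_lt with rfl | hji
      · exact hMN j
      · exact (hMLj j).trans ((hL (by omega)).trans (hN1 i))
    have hupper : upper ⊓ L i ≤ L (i - 1) :=
      Finset.sup_inf_le_of_forall_lt hL (fun j _ => hMLj j)
        (fun j hj => (hMA j (Finset.mem_filter.1 hj).1).trans (hϖA.trans (hL (by omega))))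
        (hL (by omega)) (fun j hj => not_le.1 (Finset.mem_filter.1 hj).2)
    calc A ⊓ L i = lower ⊔ upper ⊓ L i := by
          rw [← sup_inf_assoc_of_le _ (hlower.trans (hN2 i)), ← Finset.sup_union,
            Finset.filter_union_filter_not_eq]
      _ ≤ N i := sup_le hlower (hupper.trans (hN1 i))
  · have hA0 : A ⊓ L 0 ≤ ϖ • A :=
      Finset.sup_inf_le_of_forall_lt hL (fun j _ => hMLj j) hMA hϖA
        (fun j hj => by linarith [(Finset.mem_Icc.1 hj).1])
    calc A ⊓ L i ≤ ϖ • A ⊓ ϖ • L (i + p) :=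
          le_inf ((inf_le_inf_left A (hL hi)).trans hA0) (inf_le_right.trans (hLper i).le)
      _ = ϖ • (A ⊓ L (i + p)) := (pointwise_smul_inf hϖ _ _).symm
      _ ≤ ϖ • N (i + p) := smul_le_smul_left _ ih
      _ = N i := (hNper i).symm

theorem mem_of_pow_smul_mem (hϖ : ϖ ≠ 0) (hLper : ∀ i, L i = ϖ • L (i + p))
    (hNper : ∀ i, N i = ϖ • N (i + p)) {A : Submodule O V} (hA : ∀ i, A ⊓ L i ≤ N i)
    (n : ℕ) : ∀ {x : V} {i : ℤ}, ϖ ^ n • x ∈ A → x ∈ L i → x ∈ N i := by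
  induction n with
  | zero => exact fun hxA hxL => hA _ ⟨by simpa using hxA, hxL⟩
  | succ n ih =>
    intro x i hxA hxL
    rw [pow_succ, mul_smul] at hxA
    have hϖx : ϖ • x ∈ N (i - p) :=
      ih hxA (by rw [hLper, sub_add_cancel]; exact smul_mem_pointwise_smul _ _ _ hxL)
    rwa [hNper, sub_add_cancel, smul_mem_pointwise_smul_iff hϖ] at hϖx

theorem pointwise_smul_inf_sup_eq (hϖ : ϖ ≠ 0) {U : Submodule O V} (hU : ϖ • U = U)
    (hLper : ∀ i, L i = ϖ • L (i + p)) (i : ℤ) :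
    ϖ • (U ⊓ L (i + p) ⊔ L (i + p - 1)) = U ⊓ L i ⊔ L (i - 1) := by
  rw [smul_sup', pointwise_smul_inf hϖ, hU, ← hLper, hLper (i - 1), sub_add_eq_add_sub]

end PeriodicChain

theorem exists_subspace_inter_sup_eq_general {O : Type*} [CommRing O] [IsDomain O]
    [IsDiscreteValuationRing O] (ϖ : O) (hϖ : Irreducible ϖ)
    {K : Type*} [Field K] [Algebra O K] [IsFractionRing O K]
    {V : Type*} [AddCommGroup V] [Module K V] [Module O V] [IsScalarTower O K V]
    (q : ℕ) (L N : ℤ → Submodule O V)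
    (hLmono : ∀ i : ℤ, L i ≤ L (i + 1))
    (hLfg : ∀ i : ℤ, (L i).FG)
    (hLper : ∀ i : ℤ, L i = ϖ • L (i + q + 1))
    (hN1 : ∀ i : ℤ, L (i - 1) ≤ N i) (hN2 : ∀ i : ℤ, N i ≤ L i)
    (hNper : ∀ i : ℤ, N i = ϖ • N (i + q + 1)) :
    ∃ W : Submodule K V, ∀ i : ℤ,
      (W.restrictScalars O ⊓ L i) ⊔ L (i - 1) = N i := by
  have : Module.IsTorsionFree O V := .trans_faithfulSMul O K V
  have hp : (0 : ℤ) < q + 1 := by omega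
  have hLper' : ∀ i, L i = ϖ • L (i + (q + 1)) := fun i => by rw [← add_assoc, hLper]
  have hNper' : ∀ i, N i = ϖ • N (i + (q + 1)) := fun i => by rw [← add_assoc, hNper]
  choose M hMN hML using fun j => Submodule.exists_sup_eq_and_inf_le_maximalIdeal_smul (hN1 j)
    ((hLfg j).of_le (hN2 j))
  simp_rw [(IsDiscreteValuationRing.irreducible_iff_uniformizer ϖ).1 hϖ,
    Submodule.ideal_span_singleton_smul] at hML
  set A := (Finset.Icc 1 ((q : ℤ) + 1)).sup M
  have hAN := window_sup_inf_le hϖ.ne_zero hp (monotone_int_of_le_succ hLmono) hLper' hNper'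
    hN1 hN2 (fun j => hMN j ▸ le_sup_left) hML
  set W := Submodule.span K (A : Set V)
  have hWN : ∀ i, W.restrictScalars O ⊓ L i ≤ N i := fun i x ⟨hxW, hxL⟩ =>
    let ⟨n, hn⟩ := Submodule.exists_pow_smul_mem_of_mem_span hϖ hxW
    mem_of_pow_smul_mem hϖ.ne_zero hLper' hNper' hAN n hn hxL
  have hW : ϖ • W.restrictScalars O = W.restrictScalars O :=
    Submodule.pointwise_smul_restrictScalars (by simpa using hϖ.ne_zero) W
  have hper : Function.Periodic
      (fun i => (W.restrictScalars O ⊓ L i) ⊔ L (i - 1) = N i) (q + 1) := fun i => propext <| by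
    dsimp only
    rw [← (Submodule.pointwise_smul_injective hϖ.ne_zero).eq_iff,
      pointwise_smul_inf_sup_eq hϖ.ne_zero hW hLper' i, ← hNper']
  refine ⟨W, fun i => ?_⟩
  obtain ⟨j, hj, hij⟩ := hper.exists_mem_Ico hp i 1
  rw [Set.mem_Ico] at hj
  refine hij ▸ le_antisymm (sup_le (hWN j) (hN1 j)) ?_
  rw [← hMN j]
  refine sup_le_sup_right (le_inf ?_ ((hMN j ▸ le_sup_left).trans (hN2 j))) _
  exact (Finset.le_sup (f := M) (Finset.mem_Icc.2 ⟨hj.1, by omega⟩)).trans Submodule.subset_span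

/-- The linear-algebra lemma of Appendix 1 (proof of Proposition geom): let `O` be a DVR with
uniformizer `ϖ` and fraction field `K`, `V` a finite-dimensional `K`-vector space, and
`(L_i)_{i∈ℤ}` an increasing chain of finitely generated generating `O`-lattices with
`L_i = ϖ·L_{i+q+1}`. Given `O`-submodules `N_i` with `L_{i-1} ⊆ N_i ⊆ L_i` and
`N_i = ϖ·N_{i+q+1}`, there exists a `K`-subspace `W` of `V` such that
`(W ∩ L_i) + L_{i-1} = N_i` for all `i`. -/
theorem exists_subspace_inter_sup_eq {O : Type*} [CommRing O] [IsDomain O]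
    [IsDiscreteValuationRing O] (ϖ : O) (hϖ : Irreducible ϖ)
    {K : Type*} [Field K] [Algebra O K] [IsFractionRing O K]
    {V : Type*} [AddCommGroup V] [Module K V] [Module O V] [IsScalarTower O K V]
    [FiniteDimensional K V]
    (q : ℕ) (L N : ℤ → Submodule O V)
    (hLmono : ∀ i : ℤ, L i ≤ L (i + 1))
    (hLfg : ∀ i : ℤ, (L i).FG)
    (hLspan : ∀ i : ℤ, Submodule.span K (L i : Set V) = ⊤)
    (hLper : ∀ i : ℤ, L i = ϖ • L (i + q + 1))
    (hN1 : ∀ i : ℤ, L (i - 1) ≤ N i) (hN2 : ∀ i : ℤ, N i ≤ L i)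
    (hNper : ∀ i : ℤ, N i = ϖ • N (i + q + 1)) :
    ∃ W : Submodule K V, ∀ i : ℤ,
      (W.restrictScalars O ⊓ L i) ⊔ L (i - 1) = N i :=
  exists_subspace_inter_sup_eq_general ϖ hϖ q L N hLmono hLfg hLper hN1 hN2 hNper
end

section
/- Let R be a ring and (Q_n)_{n∈ι} a family of finitely generated projective left R-modules satisfying: (DISJ) for all n ≠ m, every R-linear map Q_n → Q_m is zero; and (GEN) every R-module M possessing a nonzero element admits a nonzero R-linear map Q_n → M for some n ∈ ι. Then for every R-module M, defining T_n(M) to be the submodule of M generated by the images of all R-linear maps Q_n → M (i.e. T_n(M) = ⨆_{f : Q_n →ₗ M} range f), the family of submodules (T_n(M))_{n∈ι} is independent (iSupIndep) and ⨆_{n∈ι} T_n(M) = M. -/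
/-!
A map `g : P → M` from a projective module into a sum of images `∑ᵢ range φᵢ` of maps
`φᵢ : Qᵢ → M` lifts through the direct sum `⨁ᵢ Qᵢ`; if `P` admits no nonzero map to any `Qᵢ`,
the lift, and hence `g`, vanishes. Applied to `P = Q_k`, (DISJ) makes `T_k(M)` meet
`∑_{m ≠ k} T_m(M)` in a submodule receiving no nonzero map from any `Q_n`, which (GEN) forces to
be zero. Likewise, by projectivity no `Q_n` maps nontrivially to `M / ∑ₙ T_n(M)`, so this
quotient is zero.
-/

universe u v w

open LinearMap

namespace Module

section Semiring

variable {R : Type*} [Semiring R] {M : Type*} [AddCommMonoid M] [Module R M]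
  {ι : Type*} {Q : ι → Type*} [∀ i, AddCommMonoid (Q i)] [∀ i, Module R (Q i)]
  {P : Type*} [AddCommMonoid P] [Module R P]

theorem range_dfinsuppLsum [DecidableEq ι] (φ : ∀ i, Q i →ₗ[R] M) :
    range (DFinsupp.lsum ℕ φ) = ⨆ i, range (φ i) := by
  rw [range_eq_map, ← DFinsupp.iSup_range_lsingle, Submodule.map_iSup]
  congr! with i
  rw [← range_comp]
  congr 1
  ext
  simp

theorem eq_zero_of_range_le_iSup_range [Projective R P] (φ : ∀ i, Q i →ₗ[R] M)
    (hPQ : ∀ i (f : P →ₗ[R] Q i), f = 0) (g : P →ₗ[R] M)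
    (hg : range g ≤ ⨆ i, range (φ i)) : g = 0 := by
  classical
  set F := DFinsupp.lsum ℕ φ
  rw [← range_dfinsuppLsum] at hg
  obtain ⟨h, hh⟩ := projective_lifting_property F.rangeRestrict
    (g.codRestrict _ fun x => hg ⟨x, rfl⟩) F.surjective_rangeRestrict
  have h0 : h = 0 :=
    ext fun x => DFinsupp.ext fun i => congr($(hPQ i (DFinsupp.lapply i ∘ₗ h)) x)
  ext x
  simpa [h0] using congr(($hh x : M)).symm

variable (R) in
def traceSubmodule (P M : Type*) [AddCommMonoid P] [Module R P] [AddCommMonoid M] [Module R M] :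
    Submodule R M :=
  ⨆ f : P →ₗ[R] M, range f

theorem range_le_traceSubmodule (f : P →ₗ[R] M) : range f ≤ traceSubmodule R P M :=
  le_iSup (fun f : P →ₗ[R] M => range f) f

theorem eq_zero_of_range_le_iSup_traceSubmodule [Projective R P]
    (hPQ : ∀ i (f : P →ₗ[R] Q i), f = 0) (g : P →ₗ[R] M)
    (hg : range g ≤ ⨆ i, traceSubmodule R (Q i) M) : g = 0 :=
  eq_zero_of_range_le_iSup_range (fun s : Σ i, Q i →ₗ[R] M => s.2) (fun s => hPQ s.1) g
    (by rwa [iSup_sigma])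

theorem eq_zero_of_range_le_traceSubmodule {Q : Type*} [AddCommMonoid Q] [Module R Q]
    [Projective R P] (hPQ : ∀ f : P →ₗ[R] Q, f = 0) (g : P →ₗ[R] M)
    (hg : range g ≤ traceSubmodule R Q M) : g = 0 :=
  eq_zero_of_range_le_iSup_traceSubmodule (Q := fun _ : Unit => Q) (fun _ => hPQ) g
    (by rwa [iSup_const])

end Semiring

section Ring

variable {R : Type*} [Ring R] {M : Type w} [AddCommGroup M] [Module R M]

theorem eq_zero_of_traceSubmodule_le {P : Type*} [AddCommGroup P] [Module R P] [Projective R P]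
    {N : Submodule R M} (hN : traceSubmodule R P M ≤ N) (f : P →ₗ[R] M ⧸ N) : f = 0 := by
  obtain ⟨g, rfl⟩ := projective_lifting_property N.mkQ f N.mkQ_surjective
  rw [← range_le_ker_iff, Submodule.ker_mkQ]
  exact (range_le_traceSubmodule g).trans hN

variable {ι : Type*} (Q : ι → Type*) [∀ n, AddCommGroup (Q n)] [∀ n, Module R (Q n)]

theorem exists_ne_zero_range_le_of_ne_bot
    (hgen : ∀ (N : Type w) [AddCommGroup N] [Module R N], (∃ x : N, x ≠ 0) →
      ∃ (n : ι) (f : Q n →ₗ[R] N), f ≠ 0)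
    {N : Submodule R M} (hN : N ≠ ⊥) : ∃ (n : ι) (g : Q n →ₗ[R] M), g ≠ 0 ∧ range g ≤ N := by
  obtain ⟨x, hxN, hx0⟩ := N.exists_mem_ne_zero_of_ne_bot hN
  obtain ⟨n, f, hf⟩ := hgen N ⟨⟨x, hxN⟩, by simpa using hx0⟩
  refine ⟨n, N.subtype ∘ₗ f, fun h => hf ?_, ?_⟩
  · ext y
    simpa using congr($h y)
  · exact (range_comp_le_range f N.subtype).trans N.range_subtype.le

variable [∀ n, Projective R (Q n)]

theorem iSupIndep_traceSubmodule (hdisj : ∀ n m : ι, n ≠ m → ∀ f : Q n →ₗ[R] Q m, f = 0)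
    (hgen : ∀ (N : Type w) [AddCommGroup N] [Module R N], (∃ x : N, x ≠ 0) →
      ∃ (n : ι) (f : Q n →ₗ[R] N), f ≠ 0) :
    iSupIndep fun n => traceSubmodule R (Q n) M := by
  refine fun n => disjoint_iff.mpr (by_contra fun hne => ?_)
  obtain ⟨k, g, hg0, hgN⟩ := exists_ne_zero_range_le_of_ne_bot Q hgen hne
  apply hg0
  obtain rfl | hkn := eq_or_ne k n
  · exact eq_zero_of_range_le_iSup_traceSubmodule (Q := fun m : {m // m ≠ k} => Q m)
      (fun m => hdisj k m (Ne.symm m.2)) g (hgN.trans (inf_le_right.trans iSup_subtype'.le))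
  · exact eq_zero_of_range_le_traceSubmodule (hdisj k n hkn) g (hgN.trans inf_le_left)

theorem iSup_traceSubmodule_eq_top
    (hgen : ∀ (N : Type w) [AddCommGroup N] [Module R N], (∃ x : N, x ≠ 0) →
      ∃ (n : ι) (f : Q n →ₗ[R] N), f ≠ 0) :
    ⨆ n, traceSubmodule R (Q n) M = ⊤ := by
  by_contra hne
  have := Submodule.Quotient.nontrivial_iff.mpr hne
  obtain ⟨n, f, hf⟩ := hgen (M ⧸ ⨆ n, traceSubmodule R (Q n) M) (exists_ne 0)
  exact hf (eq_zero_of_traceSubmodule_le (le_iSup (fun n => traceSubmodule R (Q n) M) n) f)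

end Ring

end Module

theorem iSupIndep_trace_and_iSup_trace_eq_top_general
    {R : Type u} [Ring R] {ι : Type v} (Q : ι → Type w)
    [∀ n, AddCommGroup (Q n)] [∀ n, Module R (Q n)]
    [∀ n, Module.Projective R (Q n)]
    (hdisj : ∀ n m : ι, n ≠ m → ∀ f : Q n →ₗ[R] Q m, f = 0)
    (hgen : ∀ (M : Type w) [AddCommGroup M] [Module R M], (∃ x : M, x ≠ 0) →
      ∃ (n : ι) (f : Q n →ₗ[R] M), f ≠ 0)
    (M : Type w) [AddCommGroup M] [Module R M] :
    iSupIndep (fun n : ι => ⨆ f : Q n →ₗ[R] M, LinearMap.range f) ∧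
      (⨆ n : ι, ⨆ f : Q n →ₗ[R] M, LinearMap.range f) = ⊤ :=
  ⟨Module.iSupIndep_traceSubmodule Q hdisj hgen, Module.iSup_traceSubmodule_eq_top Q hgen⟩

/-- The abstract decomposition principle of Appendix 2: let `(Q_n)_{n∈ι}` be a family of
finitely generated projective left `R`-modules such that (DISJ) every map `Q_n → Q_m` with
`n ≠ m` is zero and (GEN) every nonzero `R`-module receives a nonzero map from some `Q_n`.
Then, for every `R`-module `M`, the trace submodules
`T_n(M) = ⨆_{f : Q_n →ₗ[R] M} range f` form an independent family with supremum `M`. -/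
theorem iSupIndep_trace_and_iSup_trace_eq_top
    {R : Type u} [Ring R] {ι : Type v} (Q : ι → Type w)
    [∀ n, AddCommGroup (Q n)] [∀ n, Module R (Q n)]
    [∀ n, Module.Finite R (Q n)] [∀ n, Module.Projective R (Q n)]
    (hdisj : ∀ n m : ι, n ≠ m → ∀ f : Q n →ₗ[R] Q m, f = 0)
    (hgen : ∀ (M : Type w) [AddCommGroup M] [Module R M], (∃ x : M, x ≠ 0) →
      ∃ (n : ι) (f : Q n →ₗ[R] M), f ≠ 0)
    (M : Type w) [AddCommGroup M] [Module R M] :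
    iSupIndep (fun n : ι => ⨆ f : Q n →ₗ[R] M, LinearMap.range f) ∧
      (⨆ n : ι, ⨆ f : Q n →ₗ[R] M, LinearMap.range f) = ⊤ :=
  iSupIndep_trace_and_iSup_trace_eq_top_general Q hdisj hgen M
end

section
/- Let R be a commutative ring, G a group, and f, g : MonoidAlgebra R G → R two R-algebra homomorphisms. If (ker f) + (ker g) ≠ MonoidAlgebra R G (the sum of the two kernel ideals is a proper ideal), then there exists a maximal ideal M of R such that f(of a) − g(of a) ∈ M for every a ∈ G, i.e. the characters f and g agree modulo M on all group elements. -/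
/-- Claim "R" of the proof of Lemma comb2/coro2: if `f, g : R[G] → R` are two `R`-algebra
homomorphisms on a group algebra whose kernel ideals do not sum to the unit ideal, then
there is a maximal ideal `M` of `R` modulo which the characters `f` and `g` agree on all
group elements. -/
theorem exists_maximalIdeal_characters_congruent
    {R : Type*} [CommRing R] {G : Type*} [Group G]
    (f g : MonoidAlgebra R G →ₐ[R] R)
    (h : RingHom.ker f + RingHom.ker g ≠ ⊤) :
    ∃ M : Ideal R, M.IsMaximal ∧
      ∀ a : G, f (MonoidAlgebra.of R G a) - g (MonoidAlgebra.of R G a) ∈ M := by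
  set I : Ideal (MonoidAlgebra R G) := RingHom.ker f + RingHom.ker g with hI
  have hsurj : Function.Surjective (f : MonoidAlgebra R G →+* R) := fun r =>
    ⟨algebraMap R _ r, f.commutes r⟩
  have hJ : I.map (f : MonoidAlgebra R G →+* R) ≠ ⊤ := by
    intro htop
    apply h
    have := Ideal.comap_map_of_surjective _ hsurj I
    rw [htop, Ideal.comap_top, ← RingHom.ker_eq_comap_bot] at this
    have hker : RingHom.ker (f : MonoidAlgebra R G →+* R) ≤ I :=
      le_sup_left
    rw [sup_eq_left.mpr hker] at this
    exact this.symm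
  obtain ⟨M, hM, hle⟩ := Ideal.exists_le_maximal _ hJ
  refine ⟨M, hM, fun a => ?_⟩
  have hmem : MonoidAlgebra.of R G a - algebraMap R _ (g (MonoidAlgebra.of R G a)) ∈ I := by
    apply Ideal.mem_sup_right
    simp only [RingHom.mem_ker, AlgHom.coe_toRingHom, map_sub, sub_eq_zero]
    exact (g.commutes _).symm
  have := Ideal.mem_map_of_mem (f : MonoidAlgebra R G →+* R) hmem
  rw [map_sub] at this
  have hfc : (f : MonoidAlgebra R G →+* R) (algebraMap R _ (g (MonoidAlgebra.of R G a)))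
      = g (MonoidAlgebra.of R G a) := f.commutes _
  rw [hfc] at this
  exact hle this
end

section
/- Let d ≥ 1, let ρ : Fin d → ℝ be strictly decreasing, let w be a permutation of Fin d, and let J be a finset of ℕ contained in {1,…,d−1}. Assume that for every k with 1 ≤ k ≤ d−1 and k ∉ J one has ∑_{i : (i:ℕ) < k} ρ(w i) = ∑_{i : (i:ℕ) < k} ρ i. Then w belongs to the subgroup of Equiv.Perm (Fin d) generated by the adjacent transpositions swap(k−1, k) for k ∈ J. -/
/-- Order behaviour of an adjacent transposition `swap a b` with `b = a + 1`. -/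
lemma swap_adj_lt_iff {d : ℕ} {a b x y : Fin d} (hab : (a : ℕ) + 1 = b) :
    Equiv.swap a b x < Equiv.swap a b y ↔
      ((x < y ∧ ¬(x = a ∧ y = b)) ∨ (x = b ∧ y = a)) := by
  simp only [Equiv.swap_apply_def]
  split_ifs <;>
    simp only [Fin.lt_def, Fin.ext_iff, not_and] at * <;> omega



/-- The type-`A` case of the second step of Lemma comb2: let `ρ : Fin d → ℝ` be strictly
decreasing, `w` a permutation of `Fin d` and `J ⊆ {1,…,d-1}`. If for every `k ∉ J` with
`1 ≤ k ≤ d-1` the initial-segment sums `∑_{i<k} ρ(w i)` and `∑_{i<k} ρ i` agree (i.e.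
`w(ρ)` and `ρ` pair equally with every fundamental coweight `ω_k`, `k ∉ J`), then `w`
belongs to the parabolic subgroup of `S_d` generated by the adjacent transpositions
`swap (k-1) k` for `k ∈ J`. -/
theorem mem_closure_swaps_of_initialSegment_sums_eq
    {d : ℕ} (hd : 1 ≤ d) (ρ : Fin d → ℝ) (hρ : StrictAnti ρ)
    (w : Equiv.Perm (Fin d)) (J : Finset ℕ) (hJ : J ⊆ Finset.Icc 1 (d - 1))
    (h : ∀ k : ℕ, 1 ≤ k → k ≤ d - 1 → k ∉ J →
      ∑ i ∈ Finset.univ.filter (fun i : Fin d => (i : ℕ) < k), ρ (w i) =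
        ∑ i ∈ Finset.univ.filter (fun i : Fin d => (i : ℕ) < k), ρ i) :
    w ∈ Subgroup.closure {s : Equiv.Perm (Fin d) | ∃ k ∈ J, ∃ hk : k < d,
      s = Equiv.swap (⟨k - 1, lt_of_le_of_lt (Nat.sub_le k 1) hk⟩ : Fin d) ⟨k, hk⟩} := by
  classical
  set S : Set (Equiv.Perm (Fin d)) := {s : Equiv.Perm (Fin d) | ∃ k ∈ J, ∃ hk : k < d,
      s = Equiv.swap (⟨k - 1, lt_of_le_of_lt (Nat.sub_le k 1) hk⟩ : Fin d) ⟨k, hk⟩} with hS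
  -- Step 1: `w` maps every initial segment `{i < k}` with `k ∉ J` into itself.
  have key : ∀ k : ℕ, k ∉ J → ∀ i : Fin d, (i : ℕ) < k → ((w i : ℕ)) < k := by
    intro k hk i hi
    by_cases hkd : d ≤ k
    · exact lt_of_lt_of_le (w i).isLt hkd
    push_neg at hkd
    have hk1 : 1 ≤ k := by omega
    have hsum := h k hk1 (by omega) hk
    set A : Finset (Fin d) := Finset.univ.filter (fun i : Fin d => (i : ℕ) < k) with hA
    set B : Finset (Fin d) := A.image w with hB
    have hcard : B.card = A.card := Finset.card_image_of_injective _ w.injective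
    have hsum2 : ∑ j ∈ B, ρ j = ∑ i ∈ A, ρ i := by
      rw [hB, Finset.sum_image (fun x _ y _ hxy => w.injective hxy)]
      exact hsum
    have hBA : B = A := by
      by_contra hne
      have hABne : (A \ B).Nonempty := by
        rw [Finset.sdiff_nonempty]
        intro hsub
        exact hne (Finset.eq_of_subset_of_card_le hsub hcard.le).symm
      have hm : (A \ B).card = (B \ A).card := Finset.card_sdiff_comm hcard.symm
      set c : ℝ := ρ ⟨k - 1, by omega⟩ with hc
      have h1 : ∀ x ∈ A \ B, c ≤ ρ x := by
        intro x hx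
        have hxk : (x : ℕ) < k := by
          have := (Finset.mem_sdiff.1 hx).1
          rw [hA, Finset.mem_filter] at this
          exact this.2
        exact hρ.antitone (by simp [Fin.le_def]; omega)
      have h2 : ∀ x ∈ B \ A, ρ x < c := by
        intro x hx
        have hxk : ¬ (x : ℕ) < k := by
          have := (Finset.mem_sdiff.1 hx).2
          rw [hA, Finset.mem_filter] at this
          simpa using this
        exact hρ (by simp [Fin.lt_def]; omega)
      have hBAne : (B \ A).Nonempty := by
        rw [← Finset.card_pos, ← hm, Finset.card_pos]; exact hABne
      have hlt : ∑ x ∈ B \ A, ρ x < ∑ x ∈ A \ B, ρ x := by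
        calc ∑ x ∈ B \ A, ρ x < ∑ _x ∈ B \ A, c :=
              Finset.sum_lt_sum_of_nonempty hBAne h2
          _ = (B \ A).card • c := by rw [Finset.sum_const]
          _ = (A \ B).card • c := by rw [hm]
          _ = ∑ _x ∈ A \ B, c := by rw [Finset.sum_const]
          _ ≤ ∑ x ∈ A \ B, ρ x := Finset.sum_le_sum h1
      have heq : (∑ x ∈ A \ B, ρ x) - ∑ x ∈ B \ A, ρ x =
          (∑ x ∈ A, ρ x) - ∑ x ∈ B, ρ x := Finset.sum_sdiff_sub_sum_sdiff
      rw [hsum2, sub_self] at heq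
      linarith
    have hmem : w i ∈ B := Finset.mem_image_of_mem w (by simp [hA, hi])
    rw [hBA, hA, Finset.mem_filter] at hmem
    exact hmem.2
  -- Step 2: induction on the number of inversions.
  suffices main : ∀ n (u : Equiv.Perm (Fin d)),
      (Finset.univ.filter (fun p : Fin d × Fin d => p.1 < p.2 ∧ u p.2 < u p.1)).card = n →
      (∀ k : ℕ, k ∉ J → ∀ i : Fin d, (i : ℕ) < k → ((u i : ℕ)) < k) →
      u ∈ Subgroup.closure S from main _ w rfl key
  intro n
  induction n using Nat.strong_induction_on with
  | _ n ih =>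
  intro u hn hu
  by_cases h1 : u = 1
  · rw [h1]; exact Subgroup.one_mem _
  -- find an adjacent descent of `u⁻¹`
  have hdes : ∃ a b : Fin d, (a : ℕ) + 1 = (b : ℕ) ∧ u⁻¹ b < u⁻¹ a := by
    by_contra hcon
    push_neg at hcon
    apply h1
    obtain ⟨m, rfl⟩ : ∃ m, d = m + 1 := ⟨d - 1, by omega⟩
    have hmono : StrictMono (⇑(u⁻¹ : Equiv.Perm (Fin (m + 1)))) := by
      rw [Fin.strictMono_iff_lt_succ]
      intro i
      have hne : (u⁻¹ : Equiv.Perm (Fin (m + 1))) i.castSucc ≠ u⁻¹ i.succ := by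
        intro hh
        have := (u⁻¹ : Equiv.Perm (Fin (m + 1))).injective hh
        simp only [Fin.ext_iff, Fin.coe_castSucc, Fin.val_succ] at this
        omega
      exact lt_of_le_of_ne (hcon i.castSucc i.succ (by simp)) hne
    have hwf : WellFoundedLT (Fin (m + 1)) := inferInstance
    have hid : (⇑(u⁻¹ : Equiv.Perm (Fin (m + 1)))) = id := by
      apply (hmono.range_inj strictMono_id).1
      simp [Set.range_id, Equiv.range_eq_univ]
    have hone : u⁻¹ = 1 := Equiv.ext fun x => congrFun hid x
    simpa using congrArg Inv.inv hone
  obtain ⟨a, b, hab, hdesc⟩ := hdes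
  have hbd : (b : ℕ) < d := b.isLt
  -- the descent position lies in `J`
  have hkJ : (b : ℕ) ∈ J := by
    by_contra hkJ
    have himg := hu (b : ℕ) hkJ
    set A : Finset (Fin d) := Finset.univ.filter (fun i : Fin d => (i : ℕ) < (b : ℕ)) with hA
    have hsub : A.image u ⊆ A := by
      intro x hx
      obtain ⟨y, hy, rfl⟩ := Finset.mem_image.1 hx
      rw [hA, Finset.mem_filter] at hy ⊢
      exact ⟨Finset.mem_univ _, himg y hy.2⟩
    have hAeq : A.image u = A := Finset.eq_of_subset_of_card_le hsub
      (le_of_eq (Finset.card_image_of_injective _ u.injective).symm)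
    have haA : a ∈ A := by rw [hA, Finset.mem_filter]; exact ⟨Finset.mem_univ _, by omega⟩
    rw [← hAeq] at haA
    obtain ⟨y, hy, hya⟩ := Finset.mem_image.1 haA
    have hinva : (u⁻¹ a : ℕ) < (b : ℕ) := by
      have hxy : u⁻¹ a = y := by rw [← hya]; exact u.symm_apply_apply y
      rw [hxy]
      rw [hA, Finset.mem_filter] at hy
      exact hy.2
    have hinvb : ¬ ((u⁻¹ b : ℕ) < (b : ℕ)) := by
      intro hh
      have := himg (u⁻¹ b) hh
      simp at this
    rw [Fin.lt_def] at hdesc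
    omega
  -- the adjacent swap at the descent
  set s : Equiv.Perm (Fin d) := Equiv.swap a b with hs
  have hsS : s ∈ S := by
    refine ⟨(b : ℕ), hkJ, hbd, ?_⟩
    have e1 : a = (⟨(b : ℕ) - 1, lt_of_le_of_lt (Nat.sub_le (b : ℕ) 1) hbd⟩ : Fin d) := by
      rw [Fin.ext_iff]; simp; omega
    have e2 : (⟨(b : ℕ), hbd⟩ : Fin d) = b := rfl
    rw [hs, e2, ← e1]
  have hsmem : s ∈ Subgroup.closure S := Subgroup.subset_closure hsS
  -- the invariant holds for `s * u`
  have hinv' : ∀ k : ℕ, k ∉ J → ∀ i : Fin d, (i : ℕ) < k → (((s * u) i : ℕ)) < k := by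
    intro k hk i hi
    have hui := hu k hk i hi
    have hkb : k ≠ (b : ℕ) := fun hh => hk (hh ▸ hkJ)
    rw [Equiv.Perm.mul_apply, hs]
    by_cases hua : u i = a
    · rw [hua, Equiv.swap_apply_left]
      rw [hua] at hui
      omega
    by_cases hub : u i = b
    · rw [hub, Equiv.swap_apply_right]
      rw [hub] at hui
      omega
    · rw [Equiv.swap_apply_of_ne_of_ne hua hub]
      exact hui
  -- the inversion count strictly decreases
  set p0 : Fin d × Fin d := (u⁻¹ b, u⁻¹ a) with hp0def
  have habf : a < b := by rw [Fin.lt_def]; omega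
  have hp0 : p0 ∈ Finset.univ.filter
      (fun p : Fin d × Fin d => p.1 < p.2 ∧ u p.2 < u p.1) := by
    rw [Finset.mem_filter]
    exact ⟨Finset.mem_univ _, hdesc, by simpa [hp0def] using habf⟩
  have hfil : Finset.univ.filter
        (fun p : Fin d × Fin d => p.1 < p.2 ∧ (s * u) p.2 < (s * u) p.1)
      = (Finset.univ.filter
        (fun p : Fin d × Fin d => p.1 < p.2 ∧ u p.2 < u p.1)).erase p0 := by
    ext p
    simp only [Finset.mem_erase, Finset.mem_filter, Finset.mem_univ, true_and,
      Equiv.Perm.mul_apply, hs]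
    rw [swap_adj_lt_iff hab]
    constructor
    · rintro ⟨h12, hcase⟩
      rcases hcase with ⟨hlt, hne⟩ | ⟨hb2, ha1⟩
      · refine ⟨?_, h12, hlt⟩
        rintro rfl
        exact hne ⟨u.apply_symm_apply a, u.apply_symm_apply b⟩
      · exfalso
        have e2 : p.2 = u⁻¹ b := by rw [← hb2]; exact (u.symm_apply_apply p.2).symm
        have e1 : p.1 = u⁻¹ a := by rw [← ha1]; exact (u.symm_apply_apply p.1).symm
        rw [e1, e2] at h12
        exact absurd h12 (asymm hdesc)
    · rintro ⟨hne, h12, hlt⟩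
      refine ⟨h12, Or.inl ⟨hlt, ?_⟩⟩
      rintro ⟨ha2, hb1⟩
      apply hne
      have e2 : p.2 = u⁻¹ a := by rw [← ha2]; exact (u.symm_apply_apply p.2).symm
      have e1 : p.1 = u⁻¹ b := by rw [← hb1]; exact (u.symm_apply_apply p.1).symm
      rw [hp0def]
      exact Prod.ext e1 e2
  have hnpos : 0 < n := by rw [← hn]; exact Finset.card_pos.2 ⟨p0, hp0⟩
  have hcard : (Finset.univ.filter
      (fun p : Fin d × Fin d => p.1 < p.2 ∧ (s * u) p.2 < (s * u) p.1)).card < n := by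
    rw [hfil, Finset.card_erase_of_mem hp0, hn]
    omega
  have hmem' := ih _ hcard (s * u) rfl hinv'
  have hfin : u = s * (s * u) := by
    rw [← mul_assoc, hs, Equiv.swap_mul_self, one_mul]
  rw [hfin]
  exact Subgroup.mul_mem _ hsmem hmem'
end

section
/- Let F be a field of characteristic zero, n a natural number, and U₀ a ℚ-linear subspace of ℚ^n = (Fin n → ℚ). Let U be the F-linear span in F^n = (Fin n → F) of the image of U₀ under the coordinatewise map v ↦ (i ↦ algebraMap ℚ F (v i)), and let B(x,y) = ∑_i x_i·y_i be the standard bilinear form on F^n. Then the restriction of B to U is nondegenerate: if x ∈ U satisfies B(x,y) = 0 for all y ∈ U, then x = 0. -/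
/-!
Choose a matrix `M` whose rows form a basis of `U₀`. Over the ordered field `ℚ` the Gram matrix
`M * Mᵀ` is invertible: `c ⬝ᵥ (M * Mᵀ) *ᵥ c` is the sum of the squares of the entries of
`Mᵀ *ᵥ c`, so it vanishes only when `Mᵀ *ᵥ c = 0`.
Invertibility survives the ring map `ℚ → F`, and an invertible Gram matrix makes the dot product
nondegenerate on the row span, which is the `F`-span of the image of `U₀`.
-/

open Matrix Submodule Set

theorem Matrix.isUnit_mul_transpose_of_linearIndependent_row {K ι m : Type*} [Field K]
    [LinearOrder K] [IsStrictOrderedRing K] [Fintype ι] [DecidableEq ι] [Fintype m]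
    {M : Matrix ι m K} (hM : LinearIndependent K M.row) : IsUnit (M * Mᵀ) := by
  have hMt : LinearMap.ker Mᵀ.mulVecLin = ⊥ :=
    LinearMap.ker_eq_bot.mpr (mulVec_injective_iff.mpr (by rwa [col_transpose]))
  have hker := ker_mulVecLin_transpose_mul_self Mᵀ
  rw [transpose_transpose] at hker
  rw [← mulVec_injective_iff_isUnit, ← coe_mulVecLin, ← LinearMap.ker_eq_bot, hker, hMt]

theorem Matrix.eq_zero_of_mem_span_row_of_forall_dotProduct_eq_zero {L ι m : Type*} [Field L]
    [Fintype ι] [DecidableEq ι] [Fintype m] {M : Matrix ι m L} (hM : IsUnit (M * Mᵀ))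
    {x : m → L} (hx : x ∈ span L (range M.row))
    (hortho : ∀ y ∈ span L (range M.row), x ⬝ᵥ y = 0) : x = 0 := by
  obtain ⟨c, rfl⟩ : ∃ c, c ᵥ* M = x := by rwa [← range_vecMulLinear] at hx
  have hMx : M *ᵥ (c ᵥ* M) = 0 := by
    ext i
    simpa [mulVec, dotProduct_comm] using hortho (M i) (subset_span ⟨i, rfl⟩)
  have hc : c = 0 := by
    apply mulVec_injective_iff_isUnit.mpr hM
    rwa [← mulVec_mulVec, mulVec_transpose, mulVec_zero]
  rw [hc, zero_vecMul]

theorem Submodule.span_image_algebraMap_comp_span_eq {K L m : Type*} [CommSemiring K]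
    [CommSemiring L] [Algebra K L] (s : Set (m → K)) :
    span L ((fun v i => algebraMap K L (v i)) '' (span K s : Set (m → K))) =
      span L ((fun v i => algebraMap K L (v i)) '' s) := by
  have := congrArg (fun p : Submodule K (m → L) => span L (p : Set (m → L)))
    (map_span ((Algebra.linearMap K L).compLeft m) s)
  simp only [map_coe, span_span_of_tower] at this
  exact this

theorem Submodule.exists_linearIndependent_row_span_eq {K m : Type*} [Field K] [Finite m]
    (U : Submodule K (m → K)) :
    ∃ (k : ℕ) (M : Matrix (Fin k) m K), LinearIndependent K M.row ∧ span K (range M.row) = U := by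
  let b := Module.finBasis K U
  refine ⟨_, Matrix.of fun j => b j, b.linearIndependent.map' U.subtype U.ker_subtype, ?_⟩
  change span K (range (U.subtype ∘ b)) = U
  rw [range_comp, ← map_span, b.span_eq, map_subtype_top]

/-- A positive definite rational structure stays nondegenerate after extension of scalars to
a field of characteristic zero: if `U₀` is a `ℚ`-subspace of `ℚ^n` and `U` is the `F`-span
of its image in `F^n` (coordinatewise via `algebraMap ℚ F`), then the standard bilinear form
`B(x,y) = ∑ x_i y_i` restricted to `U` is nondegenerate. -/
theorem standard_bilinear_nondegenerate_on_rational_span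
    {F : Type*} [Field F] [CharZero F] {n : ℕ}
    (U₀ : Submodule ℚ (Fin n → ℚ)) :
    ∀ x ∈ Submodule.span F
      ((fun v : Fin n → ℚ => fun i : Fin n => algebraMap ℚ F (v i)) '' (U₀ : Set (Fin n → ℚ))),
      (∀ y ∈ Submodule.span F
        ((fun v : Fin n → ℚ => fun i : Fin n => algebraMap ℚ F (v i)) '' (U₀ : Set (Fin n → ℚ))),
        ∑ i : Fin n, x i * y i = 0) → x = 0 := by
  intro x hx hortho
  obtain ⟨k, M, hM, rfl⟩ := U₀.exists_linearIndependent_row_span_eq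
  let φ := algebraMap ℚ F
  have hU : span F ((fun v i => φ (v i)) '' (span ℚ (range M.row) : Set (Fin n → ℚ))) =
      span F (range (M.map φ).row) := by
    rw [span_image_algebraMap_comp_span_eq, ← range_comp]
    rfl
  have hMφ : IsUnit (M.map φ * (M.map φ)ᵀ) := by
    rw [← transpose_map, ← Matrix.map_mul]
    exact (isUnit_mul_transpose_of_linearIndependent_row hM).map φ.mapMatrix
  rw [hU] at hx hortho
  exact eq_zero_of_mem_span_row_of_forall_dotProduct_eq_zero hMφ hx hortho
end
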